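/- There exists a constant C > 0 such that for every real number r ≥ 2 and every positive integer N, with r_i = r^{2^{i−1}} and β_{i0} = (4/3)^i (log₂ r_{i+1})/(log₂ r), the following seven-term sum is at most C · r^{−1/2} (log₂ r)²: r^{−1/2} log₂ r + ∑_{i=1}^{N} r_i^{−1/2} β_{i0} log₂ r + ∑_{i=1}^{N} r_i^{−1/2} β_{i0} · i + ∑_{j=2}^{N} r_j^{−1/2} (∑_{i=1}^{j−1} r_i^{1/2} β_{i0}) log₂ r + ∑_{j=2}^{N} r_j^{−1/2} · j · (∑_{i=1}^{j−1} r_i^{1/2} β_{i0}) + ∑_{j=1}^{N} r_j^{−1/2} (log₂ r)² + ∑_{j=1}^{N} r_j^{−1/2} · j · log₂ r. (This is the arithmetic content of the bound showing the total update debt of the algorithm is O((n/√r) log² r).) -/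

import Mathlib

open Finset

/-- The doubly exponentially growing sequence `r_i = r^(2^(i-1))`, so that
`r_1 = r` and `r_{i+1} = r_i²`. -/
noncomputable def rseq (r : ℝ) (i : ℕ) : ℝ := r ^ 2 ^ (i - 1)

/-- `β_{i0} = (4/3)^i · log₂ r_{i+1} / log₂ r`. -/
noncomputable def beta0 (r : ℝ) (i : ℕ) : ℝ :=
  (4 / 3 : ℝ) ^ i * (Real.logb 2 (rseq r (i + 1)) / Real.logb 2 r)

/-!
For `r > 1` the logarithms cancel and `β_{i0} = (8/3)^i`. Writing
`r_i^{-1/2} = r^{-1/2} · r^{-(2^{i-1}-1)/2}`, the doubly exponential decay of the second factor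
swamps every weight `(8/3)^i (i+1)^2`: `r_i^{-1/2} (8/3)^i (i+1)^2 ≤ 2^70 r^{-1/2} 2^{-i}`, so all
seven sums are dominated by geometric series. The inner sums `∑_{i<j} r_i^{1/2} β_{i0}` are at most
`j-1` times their last term, and `r_j^{-1/2} r_{j-1}^{1/2} = r_{j-1}^{-1/2}` reduces them to the
same estimate.
-/
lemma sum_Icc_le_of_le_mul_half_pow {f : ℕ → ℝ} {c : ℝ} {m n : ℕ} (hm : 1 ≤ m) (hc : 0 ≤ c)
    (hf : ∀ i ∈ Icc m n, f i ≤ c * (1 / 2) ^ i) : ∑ i ∈ Icc m n, f i ≤ c := by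
  have hgeom : ∑ i ∈ Icc m n, ((1 : ℝ) / 2) ^ i ≤ 1 := by
    rw [← Ico_add_one_right_eq_Icc]
    refine (geom_sum_Ico_le_of_lt_one (by norm_num) (by norm_num)).trans ?_
    have : ((1 : ℝ) / 2) ^ m ≤ 1 / 2 := pow_le_of_le_one (by norm_num) (by norm_num) (by omega)
    rw [div_le_one (by norm_num)]
    linarith
  calc ∑ i ∈ Icc m n, f i ≤ ∑ i ∈ Icc m n, c * (1 / 2) ^ i := sum_le_sum hf
    _ = c * ∑ i ∈ Icc m n, ((1 : ℝ) / 2) ^ i := by rw [mul_sum]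
    _ ≤ c * 1 := by gcongr
    _ = c := mul_one c

variable {r : ℝ}

lemma beta0_eq_pow (hr : 1 < r) (i : ℕ) : beta0 r i = (8 / 3 : ℝ) ^ i := by
  have hL : Real.logb 2 r ≠ 0 := (Real.logb_pos one_lt_two hr).ne'
  rw [beta0, rseq, Nat.add_sub_cancel, Real.logb_pow, mul_div_assoc, div_self hL, mul_one]
  push_cast
  rw [← mul_pow]
  norm_num

lemma rseq_pos (hr : 0 < r) (i : ℕ) : 0 < rseq r i :=
  pow_pos hr _

lemma rseq_mono (hr : 1 ≤ r) {i k : ℕ} (h : i ≤ k) : rseq r i ≤ rseq r k :=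
  pow_le_pow_right₀ hr (Nat.pow_le_pow_right two_pos (by omega))

lemma rseq_succ {i : ℕ} (hi : 1 ≤ i) : rseq r (i + 1) = rseq r i ^ 2 := by
  rw [rseq, rseq, ← pow_mul, ← pow_succ]
  congr 2
  omega

lemma rseq_succ_rpow_neg_half_mul (hr : 0 < r) {i : ℕ} (hi : 1 ≤ i) :
    rseq r (i + 1) ^ (-(1 / 2) : ℝ) * rseq r i ^ ((1 : ℝ) / 2) = rseq r i ^ (-(1 / 2) : ℝ) := by
  have hpos := rseq_pos hr i
  rw [rseq_succ hi, ← Real.rpow_natCast, ← Real.rpow_mul hpos.le, ← Real.rpow_add hpos]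
  norm_num

lemma rseq_rpow_neg_half_le (hr : 2 ≤ r) (i : ℕ) :
    rseq r i ^ (-(1 / 2) : ℝ) ≤ r ^ (-(1 / 2) : ℝ) * 2 ^ (-(((2 : ℝ) ^ (i - 1) - 1) / 2)) := by
  have hr0 : 0 < r := by linarith
  have he : 0 ≤ ((2 : ℝ) ^ (i - 1) - 1) / 2 := by
    have := one_le_pow₀ (M₀ := ℝ) (n := i - 1) one_le_two
    linarith
  have hsplit : rseq r i ^ (-(1 / 2) : ℝ)
      = r ^ (-(1 / 2) : ℝ) * r ^ (-(((2 : ℝ) ^ (i - 1) - 1) / 2)) := by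
    rw [rseq, ← Real.rpow_natCast, ← Real.rpow_mul hr0.le, ← Real.rpow_add hr0]
    push_cast
    ring_nf
  rw [hsplit]
  exact mul_le_mul_of_nonneg_left (Real.rpow_le_rpow_of_nonpos two_pos hr (by linarith))
    (Real.rpow_nonneg hr0.le _)

lemma ten_mul_le_two_pow (i : ℕ) : 10 * i ≤ 139 + 2 ^ (i - 1) := by
  rcases le_or_gt i 5 with hi | hi
  · exact (show 10 * i ≤ 139 by omega).trans (Nat.le_add_right _ _)
  · obtain ⟨m, rfl⟩ : ∃ m, i = m + 5 := ⟨i - 5, by omega⟩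
    have hm : m < 2 ^ m := Nat.lt_two_pow_self
    rw [show m + 5 - 1 = m + 4 by omega, pow_add]
    omega

lemma eight_thirds_pow_mul_sq_le (i : ℕ) :
    (8 / 3 : ℝ) ^ i * ((i : ℝ) + 1) ^ 2
      ≤ 2 ^ 70 * 2 ^ (((2 : ℝ) ^ (i - 1) - 1) / 2) * (1 / 2) ^ i := by
  have hsq : ((i : ℝ) + 1) ^ 2 ≤ 4 ^ i := by
    have : (i : ℝ) + 1 ≤ 2 ^ i := by exact_mod_cast Nat.lt_two_pow_self
    calc ((i : ℝ) + 1) ^ 2 ≤ ((2 : ℝ) ^ i) ^ 2 := by gcongr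
      _ = 4 ^ i := by rw [← pow_mul, mul_comm, pow_mul]; norm_num
  have hexp : (5 * i : ℝ) ≤ 70 + ((2 : ℝ) ^ (i - 1) - 1) / 2 := by
    have : (10 * i : ℝ) ≤ 139 + 2 ^ (i - 1) := by exact_mod_cast ten_mul_le_two_pow i
    linarith
  have h32 : (32 : ℝ) ^ i ≤ 2 ^ 70 * 2 ^ (((2 : ℝ) ^ (i - 1) - 1) / 2) := by
    rw [show (32 : ℝ) ^ i = 2 ^ (5 * i : ℝ) by
      rw [← Real.rpow_natCast]; norm_num [Real.rpow_mul]]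
    rw [← Real.rpow_natCast 2 70, ← Real.rpow_add two_pos]
    exact Real.rpow_le_rpow_of_exponent_le one_le_two (by push_cast; linarith)
  calc (8 / 3 : ℝ) ^ i * ((i : ℝ) + 1) ^ 2 ≤ (8 / 3) ^ i * 4 ^ i := by gcongr
    _ = (64 / 3) ^ i * (1 / 2) ^ i := by rw [← mul_pow, ← mul_pow]; norm_num
    _ ≤ 32 ^ i * (1 / 2) ^ i := by gcongr; norm_num
    _ ≤ _ := by gcongr

lemma rseq_rpow_neg_half_mul_le (hr : 2 ≤ r) (i : ℕ) {x : ℝ}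
    (hx : x ≤ (8 / 3 : ℝ) ^ i * ((i : ℝ) + 1) ^ 2) :
    rseq r i ^ (-(1 / 2) : ℝ) * x ≤ 2 ^ 70 * r ^ (-(1 / 2) : ℝ) * (1 / 2) ^ i := by
  set e : ℝ := ((2 : ℝ) ^ (i - 1) - 1) / 2
  have hρ : 0 ≤ rseq r i ^ (-(1 / 2) : ℝ) :=
    Real.rpow_nonneg (rseq_pos (by linarith) i).le _
  calc rseq r i ^ (-(1 / 2) : ℝ) * x
      ≤ rseq r i ^ (-(1 / 2) : ℝ) * ((8 / 3) ^ i * ((i : ℝ) + 1) ^ 2) := by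
        gcongr
    _ ≤ r ^ (-(1 / 2) : ℝ) * 2 ^ (-e) * ((8 / 3) ^ i * ((i : ℝ) + 1) ^ 2) :=
        mul_le_mul_of_nonneg_right (rseq_rpow_neg_half_le hr i) (by positivity)
    _ ≤ r ^ (-(1 / 2) : ℝ) * 2 ^ (-e) * (2 ^ 70 * 2 ^ e * (1 / 2) ^ i) :=
        mul_le_mul_of_nonneg_left (eight_thirds_pow_mul_sq_le i) (by positivity)
    _ = 2 ^ 70 * r ^ (-(1 / 2) : ℝ) * (1 / 2) ^ i := by
        rw [Real.rpow_neg zero_le_two]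
        field_simp

lemma sum_rseq_rpow_half_mul_beta0_le (hr : 1 < r) (n : ℕ) :
    ∑ i ∈ Icc 1 n, rseq r i ^ ((1 : ℝ) / 2) * beta0 r i
      ≤ n * (rseq r n ^ ((1 : ℝ) / 2) * (8 / 3 : ℝ) ^ n) := by
  have hterm : ∀ i ∈ Icc 1 n, rseq r i ^ ((1 : ℝ) / 2) * beta0 r i
      ≤ rseq r n ^ ((1 : ℝ) / 2) * (8 / 3 : ℝ) ^ n := by
    intro i hi
    rw [beta0_eq_pow hr]
    have hin := (mem_Icc.mp hi).2
    have hpos := rseq_pos (by linarith) i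
    exact mul_le_mul (Real.rpow_le_rpow hpos.le (rseq_mono hr.le hin) (by norm_num))
      (pow_le_pow_right₀ (by norm_num) hin) (by positivity)
      (Real.rpow_nonneg (rseq_pos (by linarith) n).le _)
  simpa using sum_le_card_nsmul _ _ _ hterm

lemma rseq_rpow_neg_half_mul_sum_le (hr : 2 ≤ r) {j : ℕ} (hj : 2 ≤ j) {x : ℝ}
    (hx0 : 0 ≤ x) (hx : x ≤ j + 1) :
    rseq r j ^ (-(1 / 2) : ℝ) * x * ∑ i ∈ Icc 1 (j - 1), rseq r i ^ ((1 : ℝ) / 2) * beta0 r i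
      ≤ 2 ^ 71 * r ^ (-(1 / 2) : ℝ) * (1 / 2) ^ j := by
  obtain ⟨k, rfl⟩ : ∃ k, j = k + 1 := ⟨j - 1, by omega⟩
  rw [Nat.add_sub_cancel]
  have hr0 : 0 < r := by linarith
  have hρ : 0 ≤ rseq r (k + 1) ^ (-(1 / 2) : ℝ) := Real.rpow_nonneg (rseq_pos hr0 _).le _
  have hweight : x * k * (8 / 3 : ℝ) ^ k ≤ (8 / 3) ^ k * ((k : ℝ) + 1) ^ 2 := by
    push_cast at hx
    have : x * k ≤ ((k : ℝ) + 1) ^ 2 := by nlinarith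
    nlinarith [pow_pos (show (0 : ℝ) < 8 / 3 by norm_num) k]
  calc rseq r (k + 1) ^ (-(1 / 2) : ℝ) * x *
        ∑ i ∈ Icc 1 k, rseq r i ^ ((1 : ℝ) / 2) * beta0 r i
      ≤ rseq r (k + 1) ^ (-(1 / 2) : ℝ) * x * (k * (rseq r k ^ ((1 : ℝ) / 2) * (8 / 3) ^ k)) := by
        gcongr
        exact sum_rseq_rpow_half_mul_beta0_le (by linarith) k
    _ = rseq r (k + 1) ^ (-(1 / 2) : ℝ) * rseq r k ^ ((1 : ℝ) / 2) * (x * k * (8 / 3) ^ k) := by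
        ring
    _ = rseq r k ^ (-(1 / 2) : ℝ) * (x * k * (8 / 3) ^ k) := by
        rw [rseq_succ_rpow_neg_half_mul hr0 (by omega)]
    _ ≤ 2 ^ 70 * r ^ (-(1 / 2) : ℝ) * (1 / 2) ^ k := rseq_rpow_neg_half_mul_le hr k hweight
    _ = 2 ^ 71 * r ^ (-(1 / 2) : ℝ) * (1 / 2) ^ (k + 1) := by ring

lemma sum_Icc_one_rseq_rpow_neg_half_mul_le (hr : 2 ≤ r) (N : ℕ) {x : ℕ → ℝ}
    (hx : ∀ i, x i ≤ (8 / 3 : ℝ) ^ i * ((i : ℝ) + 1) ^ 2) :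
    ∑ i ∈ Icc 1 N, rseq r i ^ (-(1 / 2) : ℝ) * x i ≤ 2 ^ 70 * r ^ (-(1 / 2) : ℝ) :=
  sum_Icc_le_of_le_mul_half_pow le_rfl (by positivity) fun i _ =>
    rseq_rpow_neg_half_mul_le hr i (hx i)

lemma sum_Icc_two_rseq_rpow_neg_half_mul_sum_le (hr : 2 ≤ r) (N : ℕ) {x : ℕ → ℝ}
    (hx0 : ∀ j, 0 ≤ x j) (hx : ∀ j, x j ≤ j + 1) :
    ∑ j ∈ Icc 2 N, rseq r j ^ (-(1 / 2) : ℝ) * x j *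
        ∑ i ∈ Icc 1 (j - 1), rseq r i ^ ((1 : ℝ) / 2) * beta0 r i
      ≤ 2 ^ 71 * r ^ (-(1 / 2) : ℝ) :=
  sum_Icc_le_of_le_mul_half_pow one_le_two (by positivity) fun j hj =>
    rseq_rpow_neg_half_mul_sum_le hr (mem_Icc.mp hj).1 (hx0 j) (hx j)

/-- The arithmetic content of the total update debt bound: there is a
universal constant `C` such that for every `r ≥ 2` and every `N ≥ 1`, the
seven-term sum below is at most `C · r^{-1/2} (log₂ r)²`. -/
theorem total_update_debt_bound :
    ∃ C : ℝ, 0 < C ∧ ∀ r : ℝ, 2 ≤ r → ∀ N : ℕ, 1 ≤ N →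
      r ^ (-(1 / 2) : ℝ) * Real.logb 2 r +
      (∑ i ∈ Finset.Icc 1 N, rseq r i ^ (-(1 / 2) : ℝ) * beta0 r i * Real.logb 2 r) +
      (∑ i ∈ Finset.Icc 1 N, rseq r i ^ (-(1 / 2) : ℝ) * beta0 r i * (i : ℝ)) +
      (∑ j ∈ Finset.Icc 2 N, rseq r j ^ (-(1 / 2) : ℝ) *
          (∑ i ∈ Finset.Icc 1 (j - 1), rseq r i ^ ((1 : ℝ) / 2) * beta0 r i) *
          Real.logb 2 r) +
      (∑ j ∈ Finset.Icc 2 N, rseq r j ^ (-(1 / 2) : ℝ) * (j : ℝ) *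
          (∑ i ∈ Finset.Icc 1 (j - 1), rseq r i ^ ((1 : ℝ) / 2) * beta0 r i)) +
      (∑ j ∈ Finset.Icc 1 N, rseq r j ^ (-(1 / 2) : ℝ) * (Real.logb 2 r) ^ 2) +
      (∑ j ∈ Finset.Icc 1 N, rseq r j ^ (-(1 / 2) : ℝ) * (j : ℝ) * Real.logb 2 r) ≤
        C * r ^ (-(1 / 2) : ℝ) * (Real.logb 2 r) ^ 2 := by
  refine ⟨9 * 2 ^ 70, by positivity, fun r hr N _ => ?_⟩
  have hL : 1 ≤ Real.logb 2 r :=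
    (Real.le_logb_iff_rpow_le one_lt_two (by linarith)).2 (by simpa using hr)
  have hβ : ∀ i, beta0 r i = (8 / 3 : ℝ) ^ i := beta0_eq_pow (by linarith)
  have hw : ∀ i : ℕ, 1 ≤ (8 / 3 : ℝ) ^ i ∧ 1 ≤ ((i : ℝ) + 1) ^ 2 ∧ (i : ℝ) ≤ ((i : ℝ) + 1) ^ 2 :=
    fun i => ⟨one_le_pow₀ (by norm_num), by nlinarith [i.cast_nonneg (α := ℝ)],
      by nlinarith [i.cast_nonneg (α := ℝ)]⟩
  have h2 := sum_Icc_one_rseq_rpow_neg_half_mul_le hr N (x := beta0 r) fun i => by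
    rw [hβ]; nlinarith [hw i]
  have h3 := sum_Icc_one_rseq_rpow_neg_half_mul_le hr N (x := fun i => beta0 r i * i)
    fun i => by rw [hβ]; nlinarith [hw i]
  have h4 := sum_Icc_two_rseq_rpow_neg_half_mul_sum_le hr N (x := 1) (fun _ => zero_le_one)
    fun j => by simp
  have h5 := sum_Icc_two_rseq_rpow_neg_half_mul_sum_le hr N (x := fun j => j)
    (fun j => j.cast_nonneg) fun j => by simp
  have h6 := sum_Icc_one_rseq_rpow_neg_half_mul_le hr N (x := 1) fun i => by
    simp only [Pi.one_apply]; nlinarith [hw i]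
  have h7 := sum_Icc_one_rseq_rpow_neg_half_mul_le hr N (x := fun j => j) fun j => by
    nlinarith [hw j]
  simp only [Pi.one_apply, mul_one, ← mul_assoc] at h3 h4 h5 h6 h7
  have hL2 : Real.logb 2 r ≤ Real.logb 2 r ^ 2 := by nlinarith
  have hρ : 0 ≤ r ^ (-(1 / 2) : ℝ) := by positivity
  simp only [← sum_mul]
  linarith [mul_le_mul_of_nonneg_left hL2 hρ, mul_le_mul_of_nonneg_left (hL.trans hL2) hρ,
    mul_le_mul_of_nonneg_right h2 (by linarith : 0 ≤ Real.logb 2 r),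
    mul_le_mul_of_nonneg_right h4 (by linarith : 0 ≤ Real.logb 2 r),
    mul_le_mul_of_nonneg_right h6 (by positivity : 0 ≤ Real.logb 2 r ^ 2),
    mul_le_mul_of_nonneg_right h7 (by linarith : 0 ≤ Real.logb 2 r)]
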